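/- Let L = L₀ ⊕ L₁ be a nilpotent complex Leibniz superalgebra with dim L₀ = n ≥ 3 and dim L₁ = m ≥ 2, such that for every x ∈ L₀ \ L₀² the operator R_x^{n−2} vanishes on L₀ and R_x^{m−1} vanishes on L₁ (i.e., its characteristic sequence (n₁, …, n_k | m₁, …, m_s) satisfies n₁ ≤ n−2 and m₁ ≤ m−1). Suppose L is generated by two elements both lying in the odd part L₁. Then the nilindex of L is less than n + m; equivalently, L^{n+m−1} = 0. -/

import Mathlib

/-- A complex Leibniz superalgebra: a complex vector space `V` with an internal
direct-sum decomposition `V = L0 ⊕ L1`, a bilinear bracket respecting the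
`ℤ/2`-grading and satisfying the Leibniz superidentity (for homogeneous
second and third arguments). -/
structure LeibnizSuper (V : Type) [AddCommGroup V] [Module ℂ V] where
  bracket : V →ₗ[ℂ] V →ₗ[ℂ] V
  L0 : Submodule ℂ V
  L1 : Submodule ℂ V
  compl : IsCompl L0 L1
  g00 : ∀ a ∈ L0, ∀ b ∈ L0, bracket a b ∈ L0
  g01 : ∀ a ∈ L0, ∀ b ∈ L1, bracket a b ∈ L1
  g10 : ∀ a ∈ L1, ∀ b ∈ L0, bracket a b ∈ L1
  g11 : ∀ a ∈ L1, ∀ b ∈ L1, bracket a b ∈ L0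
  super_jacobi : ∀ (x : V) (α β : Bool) (y z : V),
    y ∈ (if α then L1 else L0) → z ∈ (if β then L1 else L0) →
    bracket x (bracket y z) =
      bracket (bracket x y) z - (if α && β then (-1 : ℂ) else 1) • bracket (bracket x z) y

variable {V : Type} [AddCommGroup V] [Module ℂ V]

/-- Descending central series of a Leibniz superalgebra:
`dcs S k` is `L^{k+1}`, i.e. `dcs S 0 = L¹ = L`. -/
def LeibnizSuper.dcs (S : LeibnizSuper V) : ℕ → Submodule ℂ V
  | 0 => ⊤
  | k + 1 => Submodule.span ℂ {v | ∃ a ∈ S.dcs k, ∃ b : V, v = S.bracket a b}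

/-- Descending central series of the even part `L₀` (a Leibniz algebra):
`dcs0 S k` is `L₀^{k+1}`, i.e. `dcs0 S 0 = L₀`. -/
def LeibnizSuper.dcs0 (S : LeibnizSuper V) : ℕ → Submodule ℂ V
  | 0 => S.L0
  | k + 1 => Submodule.span ℂ {v | ∃ a ∈ S.dcs0 k, ∃ b ∈ S.L0, v = S.bracket a b}

/-- `G` generates the superalgebra: the smallest linear subspace containing `G`
and closed under the bracket is all of `V`. -/
def LeibnizSuper.generates (S : LeibnizSuper V) (G : Set V) : Prop :=
  ∀ p : Submodule ℂ V, G ⊆ p → (∀ a ∈ p, ∀ b ∈ p, S.bracket a b ∈ p) → p = ⊤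

/-- The nilindex: the minimal `s ≥ 1` with `L^s = 0`. -/
noncomputable def LeibnizSuper.nilindex (S : LeibnizSuper V) : ℕ :=
  sInf {s | 1 ≤ s ∧ S.dcs (s - 1) = ⊥}

/-- The characteristic-sequence condition `n₁ ≤ n - 2`, `m₁ ≤ m - 1`:
for every `x ∈ L₀ \ L₀²` the right multiplication operator `R_x`
satisfies `R_x^{n-2} = 0` on `L₀` and `R_x^{m-1} = 0` on `L₁`. -/
def LeibnizSuper.charSeqLE (S : LeibnizSuper V) (n m : ℕ) : Prop :=
  ∀ x ∈ S.L0, x ∉ S.dcs0 1 →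
    (∀ v ∈ S.L0, ((S.bracket.flip x : Module.End ℂ V) ^ (n - 2)) v = 0) ∧
    (∀ v ∈ S.L1, ((S.bracket.flip x : Module.End ℂ V) ^ (m - 1)) v = 0)

/-!
The generators are odd, so `L = L² + W` with `W ⊆ L₁` and `dim W ≤ 2`. Hence `L₀ ⊆ L²`, and
`L^k / L^{k+1}` is purely odd for odd `k` and purely even for even `k`. Suppose `L^{n+m-1} ≠ 0`.
Counting dimensions along the strictly decreasing series gives `dim L^k / L^{k+1} ≤ 1` for
`k ≥ 2`, so the even part loses at most one dimension every two steps and `L^{2n-2} ≠ 0`.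
Pick `x ∈ L₀ ∩ L² \ L³`; it is not in `L₀² ⊆ L⁴`. If `e` spans `L^k / L^{k+1}` and
`[e,x] ∈ L^{k+3}`, then `[e,L²] ⊆ L^{k+3}`, and for odd `y, z` the super-Jacobi identity
`[e,[y,z]] = [[e,y],z] + [[e,z],y]` forces `[[e,y₀],W] ⊆ L^{k+3}` for some `y₀ ∈ W` with `[e,y₀]`
spanning `L^{k+1} / L^{k+2}`; then `L^{k+2} = L^{k+3}`, so `L^{k+2} = 0`. Hence `R_x^i(x)` spans
`L^{2i+2} / L^{2i+3}` for `i ≤ n - 2`, and `R_x^{n-2}(x) ≠ 0`, although `R_x^{n-2}` kills `L₀`.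
-/

open Module Submodule

section LinearAlgebra

variable {K E : Type*} [Field K] [AddCommGroup E] [Module K E]

theorem Submodule.finrank_le_finrank_add_one_of_le_span_singleton_sup [FiniteDimensional K E]
    {p q : Submodule K E} {e : E} (h : p ≤ span K {e} ⊔ q) : finrank K p ≤ finrank K q + 1 := by
  have hspan : finrank K (span K {e}) ≤ 1 := by
    simpa using finrank_span_le_card (R := K) ({e} : Set E)
  have := finrank_add_le_finrank_add_finrank (span K {e}) q
  have := finrank_mono h
  omega

theorem Submodule.le_span_singleton_sup_of_finrank_le [FiniteDimensional K E]
    {p q : Submodule K E} (hqp : q ≤ p) (hpq : finrank K p ≤ finrank K q + 1)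
    {e : E} (he : e ∈ p) (heq : e ∉ q) : p ≤ span K {e} ⊔ q := by
  have hle : span K {e} ⊔ q ≤ p := sup_le ((span_singleton_le_iff_mem _ _).2 he) hqp
  have hlt : q < span K {e} ⊔ q :=
    lt_of_le_of_ne le_sup_right fun h => heq (h ▸ mem_sup_left (mem_span_singleton_self e))
  have := finrank_lt_finrank_of_lt hlt
  exact (eq_of_le_of_finrank_le hle (by omega)).ge

theorem Submodule.exists_sup_span_singleton_eq_top [FiniteDimensional K E] {p : Submodule K E}
    (hp : finrank K E ≤ finrank K p + 1) : ∃ c, p ⊔ span K {c} = ⊤ := by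
  by_cases htop : p = ⊤
  · exact ⟨0, by simp [htop]⟩
  obtain ⟨c, -, hc⟩ := SetLike.exists_of_lt (lt_top_iff_ne_top.2 htop)
  refine ⟨c, top_le_iff.1 ?_⟩
  rw [sup_comm]
  exact le_span_singleton_sup_of_finrank_le le_top (by rwa [finrank_top]) mem_top hc

theorem Submodule.finrank_inf_add_finrank_le [FiniteDimensional K E] {p q : Submodule K E}
    (r : Submodule K E) (hqp : q ≤ p) :
    finrank K ↥(r ⊓ p) + finrank K q ≤ finrank K ↥(r ⊓ q) + finrank K p := by
  have hinf : r ⊓ p ⊓ q = r ⊓ q := by rw [inf_assoc, inf_eq_right.2 hqp]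
  have := finrank_sup_add_finrank_inf_eq (r ⊓ p) q
  have := finrank_mono (sup_le inf_le_right hqp : r ⊓ p ⊔ q ≤ p)
  rw [hinf] at *
  omega

theorem Submodule.finrank_span_pair_le [FiniteDimensional K E] (a b : E) :
    finrank K (span K {a, b}) ≤ 2 := by
  classical
  have := finrank_span_finset_le_card (R := K) ({a, b} : Finset E)
  rw [Finset.coe_pair, Set.finrank] at this
  exact this.trans Finset.card_le_two

theorem LinearMap.apply_mem_of_mem_span_singleton_sup {f : E →ₗ[K] E} {p q : Submodule K E}
    {u v : E} (hu : u ∈ span K {v} ⊔ q) (hv : f v ∈ p) (hq : ∀ d ∈ q, f d ∈ p) : f u ∈ p :=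
  (sup_le ((span_singleton_le_iff_mem v (p.comap f)).2 hv) hq : _ ≤ p.comap f) hu

end LinearAlgebra

namespace LeibnizSuper

variable (S : LeibnizSuper V)

def part (α : Bool) : Submodule ℂ V := if α then S.L1 else S.L0

def IsGraded (p : Submodule ℂ V) : Prop := p ≤ ⨆ α, S.part α ⊓ p

variable {S}

theorem bracket_mem_part {α β : Bool} {a b : V} (ha : a ∈ S.part α) (hb : b ∈ S.part β) :
    S.bracket a b ∈ S.part (xor α β) := by
  cases α <;> cases β
  exacts [S.g00 a ha b hb, S.g01 a ha b hb, S.g10 a ha b hb, S.g11 a ha b hb]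

theorem isCompl_part (α : Bool) : IsCompl (S.part α) (S.part !α) := by
  cases α
  exacts [S.compl, S.compl.symm]

theorem IsGraded.le_sup {p : Submodule ℂ V} (hp : S.IsGraded p) (α : Bool) :
    p ≤ S.part α ⊓ p ⊔ S.part (!α) ⊓ p := by
  rw [IsGraded, iSup_bool_eq] at hp
  cases α
  exacts [hp.trans_eq (sup_comm _ _), hp]

theorem isGraded_top : S.IsGraded ⊤ := by
  simp [IsGraded, iSup_bool_eq, part, S.compl.symm.sup_eq_top]

theorem map₂_le_of_isGraded {P Q R : Submodule ℂ V} (f : V →ₗ[ℂ] V →ₗ[ℂ] V)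
    (hP : S.IsGraded P) (hQ : S.IsGraded Q)
    (h : ∀ α β, ∀ p ∈ S.part α ⊓ P, ∀ q ∈ S.part β ⊓ Q, f p q ∈ R) : map₂ f P Q ≤ R := by
  refine (map₂_le_map₂ hP hQ).trans ?_
  simp only [map₂_iSup_left, map₂_iSup_right]
  exact iSup₂_le fun β α => map₂_le.2 (h α β)

theorem part_not_inf_sup_le {A p : Submodule ℂ V} {α : Bool} (hp : S.IsGraded p)
    (hA : A ≤ S.part α) : S.part (!α) ⊓ (A ⊔ p) ≤ p :=
  calc S.part (!α) ⊓ (A ⊔ p) ≤ (S.part (!α) ⊓ p ⊔ S.part α) ⊓ S.part (!α) := by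
        rw [inf_comm]
        exact inf_le_inf_right _ <| sup_le (hA.trans le_sup_right)
          ((hp.le_sup α).trans (sup_le (inf_le_left.trans le_sup_right) le_sup_left))
    _ = S.part (!α) ⊓ p := by
        rw [sup_inf_assoc_of_le _ inf_le_left, (isCompl_part α).inf_eq_bot, sup_bot_eq]
    _ ≤ p := inf_le_right

theorem bracket_bracket_of_mem_L1 (x : V) {y z : V} (hy : y ∈ S.L1) (hz : z ∈ S.L1) :
    S.bracket x (S.bracket y z) = S.bracket (S.bracket x y) z + S.bracket (S.bracket x z) y := by
  simpa using S.super_jacobi x true true y z hy hz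

theorem dcs_succ (k : ℕ) : S.dcs (k + 1) = map₂ S.bracket (S.dcs k) ⊤ := by
  rw [map₂_eq_span_image2, dcs]
  congr 1
  ext v
  simp [eq_comm]

theorem bracket_mem_dcs_succ {k : ℕ} {u : V} (hu : u ∈ S.dcs k) (v : V) :
    S.bracket u v ∈ S.dcs (k + 1) :=
  S.dcs_succ k ▸ apply_mem_map₂ _ hu mem_top

theorem dcs_succ_le (k : ℕ) : S.dcs (k + 1) ≤ S.dcs k := by
  induction k with
  | zero => exact le_top
  | succ k ih =>
    rw [dcs_succ]
    exact map₂_le.2 fun u hu v _ => bracket_mem_dcs_succ (ih hu) v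

theorem dcs_antitone : Antitone S.dcs := antitone_nat_of_succ_le dcs_succ_le

theorem isGraded_dcs (k : ℕ) : S.IsGraded (S.dcs k) := by
  induction k with
  | zero => exact isGraded_top
  | succ k ih =>
    refine (S.dcs_succ k).le.trans <| map₂_le_of_isGraded _ ih isGraded_top fun α β p hp q hq => ?_
    exact mem_iSup_of_mem (xor α β)
      ⟨bracket_mem_part hp.1 hq.1, bracket_mem_dcs_succ hp.2 q⟩

theorem bracket_mem_dcs {i j : ℕ} {u v : V} (hu : u ∈ S.dcs i) (hv : v ∈ S.dcs j) :
    S.bracket u v ∈ S.dcs (i + j + 1) := by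
  induction j generalizing i u v with
  | zero => exact bracket_mem_dcs_succ hu v
  | succ j ih =>
    suffices map (S.bracket u) (S.dcs (j + 1)) ≤ S.dcs (i + (j + 1) + 1) from this ⟨v, hv, rfl⟩
    rw [dcs_succ, map_map₂]
    refine map₂_le_of_isGraded _ (isGraded_dcs j) isGraded_top fun α β p hp q hq => ?_
    rw [LinearMap.compr₂_apply, S.super_jacobi u α β p q hp.1 hq.1]
    refine sub_mem ?_ (smul_mem _ _ ?_)
    · exact bracket_mem_dcs_succ (ih hu hp.2) q
    · simpa [Nat.add_right_comm, Nat.add_assoc] using ih (bracket_mem_dcs_succ hu q) hp.2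

theorem dcs_eq_bot_of_le_succ (hnil : ∃ s, S.dcs s = ⊥) {t : ℕ} (h : S.dcs t ≤ S.dcs (t + 1)) :
    S.dcs t = ⊥ := by
  have hconst : ∀ u, S.dcs (t + u) = S.dcs t := by
    intro u
    induction u with
    | zero => rfl
    | succ u ih =>
      rw [← Nat.add_assoc, dcs_succ, ih, ← dcs_succ]
      exact le_antisymm (dcs_succ_le t) h
  obtain ⟨s, hs⟩ := hnil
  exact le_bot_iff.1 (hconst s ▸ hs ▸ dcs_antitone (Nat.le_add_left s t))

theorem finrank_dcs_succ_lt [FiniteDimensional ℂ V] (hnil : ∃ s, S.dcs s = ⊥) {t : ℕ}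
    (ht : S.dcs t ≠ ⊥) : finrank ℂ (S.dcs (t + 1)) < finrank ℂ (S.dcs t) :=
  finrank_lt_finrank_of_lt <|
    lt_of_le_of_ne (S.dcs_succ_le t) fun h => ht (dcs_eq_bot_of_le_succ hnil h.ge)

theorem finrank_dcs_add_le [FiniteDimensional ℂ V] (hnil : ∃ s, S.dcs s = ⊥) {i j : ℕ}
    (hij : i ≤ j) (hj : S.dcs j ≠ ⊥) : finrank ℂ (S.dcs j) + (j - i) ≤ finrank ℂ (S.dcs i) := by
  induction j, hij using Nat.le_induction with
  | base => omega
  | succ j hij ih =>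
    have hj' : S.dcs j ≠ ⊥ := fun h => hj (le_bot_iff.1 (h ▸ S.dcs_succ_le j))
    have := finrank_dcs_succ_lt hnil hj'
    have := ih hj'
    omega

theorem dcs_succ_le_map₂_sup {W : Submodule ℂ V} (hgen : S.dcs 1 ⊔ W = ⊤) (k : ℕ) :
    S.dcs (k + 1) ≤ map₂ S.bracket (S.dcs k) W ⊔ S.dcs (k + 2) := by
  rw [dcs_succ, ← hgen, map₂_sup_right, sup_comm]
  exact sup_le_sup_left (map₂_le.2 fun u hu v hv => bracket_mem_dcs hu hv) _

theorem exists_dcs_le_span_singleton_sup {c : V} (hc : S.dcs 1 ⊔ span ℂ {c} = ⊤) (k : ℕ) :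
    ∃ e, S.dcs k ≤ span ℂ {e} ⊔ S.dcs (k + 1) := by
  induction k with
  | zero => exact ⟨c, by rw [dcs, ← hc, sup_comm]⟩
  | succ k ih =>
    obtain ⟨e, he⟩ := ih
    refine ⟨S.bracket e c, (dcs_succ_le_map₂_sup hc k).trans (sup_le ?_ le_sup_right)⟩
    rw [map₂_span_singleton_eq_map_flip, map_le_iff_le_comap]
    exact fun u hu => (S.bracket.flip c).apply_mem_of_mem_span_singleton_sup (he hu)
      (mem_sup_left (mem_span_singleton_self _)) fun _ hd =>
        mem_sup_right (bracket_mem_dcs_succ hd c)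

theorem finrank_dcs_le_of_finrank_le_add_one [FiniteDimensional ℂ V]
    (h : finrank ℂ V ≤ finrank ℂ (S.dcs 1) + 1) (k : ℕ) :
    finrank ℂ (S.dcs k) ≤ finrank ℂ (S.dcs (k + 1)) + 1 := by
  obtain ⟨c, hc⟩ := exists_sup_span_singleton_eq_top h
  obtain ⟨e, he⟩ := exists_dcs_le_span_singleton_sup hc k
  exact finrank_le_finrank_add_one_of_le_span_singleton_sup he

/-- The dimensions drop strictly from `finrank (S.dcs 1) = finrank V - 2` down to
`finrank (S.dcs (finrank V - 2)) ≥ 1`, so each of these drops is exactly one, and from then on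
the dimensions are at most one. -/
theorem finrank_dcs_le_of_finrank_eq_add_two [FiniteDimensional ℂ V] (hnil : ∃ s, S.dcs s = ⊥)
    (h : finrank ℂ V = finrank ℂ (S.dcs 1) + 2) (hlong : S.dcs (finrank ℂ V - 2) ≠ ⊥)
    {k : ℕ} (hk : 1 ≤ k) : finrank ℂ (S.dcs k) ≤ finrank ℂ (S.dcs (k + 1)) + 1 := by
  have hupper : finrank ℂ (S.dcs k) ≤ finrank ℂ (S.dcs 1) + 1 - k := by
    by_cases hk' : S.dcs k = ⊥
    · rw [hk', finrank_bot]
      exact Nat.zero_le _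
    · have := finrank_dcs_add_le hnil hk hk'
      omega
  have hlower : finrank ℂ (S.dcs 1) - k ≤ finrank ℂ (S.dcs (k + 1)) := by
    by_cases hkb : k + 1 ≤ finrank ℂ V - 2
    · have := finrank_dcs_add_le hnil hkb hlong
      have := Nat.pos_of_ne_zero fun h0 => hlong (finrank_eq_zero.1 h0)
      omega
    · omega
  omega

theorem finrank_dcs_le_finrank_dcs_succ_add_one [FiniteDimensional ℂ V]
    (hnil : ∃ s, S.dcs s = ⊥) (hcodim : finrank ℂ V ≤ finrank ℂ (S.dcs 1) + 2)
    (hlong : S.dcs (finrank ℂ V - 2) ≠ ⊥) {k : ℕ} (hk : 1 ≤ k) :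
    finrank ℂ (S.dcs k) ≤ finrank ℂ (S.dcs (k + 1)) + 1 := by
  by_cases h : finrank ℂ V ≤ finrank ℂ (S.dcs 1) + 1
  · exact finrank_dcs_le_of_finrank_le_add_one h k
  · exact finrank_dcs_le_of_finrank_eq_add_two hnil (by omega) hlong hk

theorem L0_le_dcs_one {W : Submodule ℂ V} (hW : W ≤ S.L1) (hgen : S.dcs 1 ⊔ W = ⊤) :
    S.L0 ≤ S.dcs 1 := by
  have := part_not_inf_sup_le (α := true) (isGraded_dcs 1) hW
  rwa [sup_comm, hgen, inf_top_eq] at this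

theorem part_not_inf_dcs_succ_le {W : Submodule ℂ V} (hW : W ≤ S.L1) (hgen : S.dcs 1 ⊔ W = ⊤)
    {α : Bool} {k : ℕ} (h : S.part α ⊓ S.dcs k ≤ S.dcs (k + 1)) :
    S.part (!α) ⊓ S.dcs (k + 1) ≤ S.dcs (k + 2) := by
  set A := map₂ S.bracket (S.part (!α) ⊓ S.dcs k) W
  have hA : A ≤ S.part α := map₂_le.2 fun u hu y hy => by
    simpa using bracket_mem_part (β := true) hu.1 (hW hy)
  have hsplit : map₂ S.bracket (S.dcs k) W ≤ S.dcs (k + 2) ⊔ A := by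
    refine (map₂_le_map₂_left ((isGraded_dcs k).le_sup α)).trans ?_
    rw [map₂_sup_left]
    exact sup_le_sup_right (map₂_le.2 fun u hu y _ => bracket_mem_dcs_succ (h hu) y) _
  calc S.part (!α) ⊓ S.dcs (k + 1) ≤ S.part (!α) ⊓ (A ⊔ S.dcs (k + 2)) :=
        inf_le_inf_left _ <| (dcs_succ_le_map₂_sup hgen k).trans <|
          sup_le (hsplit.trans_eq (sup_comm _ _)) le_sup_right
    _ ≤ S.dcs (k + 2) := part_not_inf_sup_le (isGraded_dcs (k + 2)) hA

theorem part_bodd_inf_dcs_le {W : Submodule ℂ V} (hW : W ≤ S.L1) (hgen : S.dcs 1 ⊔ W = ⊤)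
    (k : ℕ) : S.part k.bodd ⊓ S.dcs k ≤ S.dcs (k + 1) := by
  induction k with
  | zero => exact inf_le_left.trans (L0_le_dcs_one hW hgen)
  | succ k ih =>
    rw [Nat.bodd_succ]
    exact part_not_inf_dcs_succ_le hW hgen ih

theorem finrank_L0_le_finrank_L0_inf_dcs [FiniteDimensional ℂ V] {W : Submodule ℂ V}
    (hW : W ≤ S.L1) (hgen : S.dcs 1 ⊔ W = ⊤)
    (hdrop : ∀ k, 1 ≤ k → finrank ℂ (S.dcs k) ≤ finrank ℂ (S.dcs (k + 1)) + 1) (j : ℕ) :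
    finrank ℂ S.L0 ≤ finrank ℂ ↥(S.L0 ⊓ S.dcs (2 * j + 1)) + j := by
  induction j with
  | zero =>
    show _ ≤ finrank ℂ ↥(S.L0 ⊓ S.dcs 1) + 0
    rw [inf_eq_left.2 (L0_le_dcs_one hW hgen), Nat.add_zero]
  | succ j ih =>
    rw [show 2 * (j + 1) + 1 = 2 * j + 1 + 1 + 1 by ring]
    have hodd := finrank_inf_add_finrank_le S.L0 (S.dcs_succ_le (2 * j + 1))
    have heven : S.L0 ⊓ S.dcs (2 * j + 1 + 1) ≤ S.L0 ⊓ S.dcs (2 * j + 1 + 1 + 1) :=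
      le_inf inf_le_left (by simpa [part] using part_bodd_inf_dcs_le hW hgen (2 * j + 1 + 1))
    have := finrank_mono heven
    have := hdrop (2 * j + 1) (by omega)
    omega

theorem exists_mem_L0_mem_dcs_one_notMem_dcs_two (hnil : ∃ s, S.dcs s = ⊥)
    {W : Submodule ℂ V} (hW : W ≤ S.L1) (hgen : S.dcs 1 ⊔ W = ⊤) (h2 : S.dcs 2 ≠ ⊥) :
    ∃ x ∈ S.L0, x ∈ S.dcs 1 ∧ x ∉ S.dcs 2 := by
  by_contra! h
  have h12 : S.dcs 1 ≤ S.dcs 2 := ((isGraded_dcs 1).le_sup false).trans <|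
    sup_le (fun x hx => h x hx.1 hx.2) (part_bodd_inf_dcs_le hW hgen 1)
  exact h2 (le_bot_iff.1 (dcs_eq_bot_of_le_succ hnil h12 ▸ S.dcs_succ_le 1))

theorem dcs0_one_le_dcs_three (hL0 : S.L0 ≤ S.dcs 1) : S.dcs0 1 ≤ S.dcs 3 := by
  refine span_le.2 ?_
  rintro _ ⟨u, hu, v, hv, rfl⟩
  exact bracket_mem_dcs (i := 1) (j := 1) (hL0 hu) (hL0 hv)

theorem dcs_succ_le_of_bracket_mem {W : Submodule ℂ V} (hgen : S.dcs 1 ⊔ W = ⊤) {k : ℕ} {e : V}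
    (he : S.dcs k ≤ span ℂ {e} ⊔ S.dcs (k + 1)) (hW : ∀ y ∈ W, S.bracket e y ∈ S.dcs (k + 2)) :
    S.dcs (k + 1) ≤ S.dcs (k + 2) :=
  (dcs_succ_le_map₂_sup hgen k).trans <| sup_le (map₂_le.2 fun _ hu y hy =>
    (S.bracket.flip y).apply_mem_of_mem_span_singleton_sup (he hu) (hW y hy)
      fun _ hd => bracket_mem_dcs_succ hd y) le_rfl

theorem bracket_notMem_dcs_add_three [FiniteDimensional ℂ V] (hnil : ∃ s, S.dcs s = ⊥)
    {W : Submodule ℂ V} (hW : W ≤ S.L1) (hgen : S.dcs 1 ⊔ W = ⊤) {x e : V} {k : ℕ}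
    (hx : S.dcs 1 ≤ span ℂ {x} ⊔ S.dcs 2) (he : S.dcs k ≤ span ℂ {e} ⊔ S.dcs (k + 1))
    (he_mem : e ∈ S.dcs k)
    (hdrop : finrank ℂ (S.dcs (k + 1)) ≤ finrank ℂ (S.dcs (k + 2)) + 1)
    (hk : S.dcs (k + 2) ≠ ⊥) :
    S.bracket e x ∉ S.dcs (k + 3) := by
  intro hex
  have hbr : ∀ u ∈ S.dcs 1, S.bracket e u ∈ S.dcs (k + 3) := fun u hu =>
    (S.bracket e).apply_mem_of_mem_span_singleton_sup (hx hu) hex fun _ hd =>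
      bracket_mem_dcs he_mem hd
  have hsym : ∀ y ∈ W, ∀ z ∈ W,
      S.bracket (S.bracket e y) z + S.bracket (S.bracket e z) y ∈ S.dcs (k + 3) := by
    intro y hy z hz
    rw [← bracket_bracket_of_mem_L1 e (hW hy) (hW hz)]
    exact hbr _ (bracket_mem_dcs_succ (k := 0) mem_top z)
  obtain ⟨y₀, hy₀, hey₀⟩ : ∃ y₀ ∈ W, S.bracket e y₀ ∉ S.dcs (k + 2) := by
    by_contra! h
    exact hk (le_bot_iff.1 (dcs_eq_bot_of_le_succ hnil (dcs_succ_le_of_bracket_mem hgen he h) ▸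
      S.dcs_succ_le (k + 1)))
  -- `[[e, y₀], y₀]` is half of `[e, [y₀, y₀]]`
  have hsq : S.bracket (S.bracket e y₀) y₀ ∈ S.dcs (k + 3) := by
    have := hsym y₀ hy₀ y₀ hy₀
    rwa [← two_smul ℂ, smul_mem_iff _ two_ne_zero] at this
  have hspan : S.dcs (k + 1) ≤ span ℂ {S.bracket e y₀} ⊔ S.dcs (k + 2) :=
    le_span_singleton_sup_of_finrank_le (S.dcs_succ_le _) hdrop
      (bracket_mem_dcs_succ he_mem y₀) hey₀
  have hright : ∀ z ∈ W, S.bracket (S.bracket e y₀) z ∈ S.dcs (k + 3) := by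
    intro z hz
    have : S.bracket (S.bracket e z) y₀ ∈ S.dcs (k + 3) :=
      (S.bracket.flip y₀).apply_mem_of_mem_span_singleton_sup
        (hspan (bracket_mem_dcs_succ he_mem z)) hsq fun _ hd => bracket_mem_dcs_succ hd y₀
    simpa using sub_mem (hsym y₀ hy₀ z hz) this
  exact hk (dcs_eq_bot_of_le_succ hnil (dcs_succ_le_of_bracket_mem hgen hspan hright))

theorem pow_flip_bracket_apply_notMem_dcs [FiniteDimensional ℂ V] (hnil : ∃ s, S.dcs s = ⊥)
    {W : Submodule ℂ V} (hW : W ≤ S.L1) (hgen : S.dcs 1 ⊔ W = ⊤)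
    (hdrop : ∀ k, 1 ≤ k → finrank ℂ (S.dcs k) ≤ finrank ℂ (S.dcs (k + 1)) + 1)
    {x : V} (hx1 : x ∈ S.dcs 1) (hx2 : x ∉ S.dcs 2) {i : ℕ} (hi : S.dcs (2 * i + 1) ≠ ⊥) :
    ((S.bracket.flip x : Module.End ℂ V) ^ i) x ∈ S.dcs (2 * i + 1) ∧
      ((S.bracket.flip x : Module.End ℂ V) ^ i) x ∉ S.dcs (2 * i + 2) := by
  induction i with
  | zero => exact ⟨hx1, hx2⟩
  | succ i ih =>
    obtain ⟨hmem, hnot⟩ := ih fun h => hi (le_bot_iff.1 (h ▸ S.dcs_antitone (by omega)))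
    rw [pow_succ', Module.End.mul_apply, LinearMap.flip_apply,
      show 2 * (i + 1) + 1 = 2 * i + 1 + 1 + 1 by ring,
      show 2 * (i + 1) + 2 = 2 * i + 1 + 3 by ring]
    refine ⟨bracket_mem_dcs (j := 1) hmem hx1, bracket_notMem_dcs_add_three hnil hW hgen ?_ ?_ hmem
      (hdrop _ (by omega)) hi⟩
    · exact le_span_singleton_sup_of_finrank_le (S.dcs_succ_le 1) (hdrop 1 le_rfl) hx1 hx2
    · exact le_span_singleton_sup_of_finrank_le (S.dcs_succ_le _) (hdrop _ (by omega)) hmem hnot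

theorem dcs_one_sup_span_eq_top {G : Set V} (hG : S.generates G) : S.dcs 1 ⊔ span ℂ G = ⊤ :=
  hG _ (fun _ hg => mem_sup_right (subset_span hg)) fun _ _ v _ =>
    mem_sup_left (bracket_mem_dcs_succ mem_top v)

end LeibnizSuper

open LeibnizSuper

theorem leibnizSuper_nilindex_lt_of_odd_generators_general
    {V : Type} [AddCommGroup V] [Module ℂ V] [FiniteDimensional ℂ V]
    (S : LeibnizSuper V) (n m : ℕ) (hn : 3 ≤ n)
    (hdim0 : Module.finrank ℂ S.L0 = n) (hdim1 : Module.finrank ℂ S.L1 = m)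
    (hnilp : ∃ s, S.dcs s = ⊥)
    (hchar : S.charSeqLE n m)
    (hgen : ∃ a ∈ S.L1, ∃ b ∈ S.L1, S.generates {a, b}) :
    S.dcs (n + m - 2) = ⊥ := by
  obtain ⟨a, ha, b, hb, hab⟩ := hgen
  have hW : span ℂ {a, b} ≤ S.L1 :=
    span_le.2 (Set.insert_subset ha (Set.singleton_subset_iff.2 hb))
  have hgenW := dcs_one_sup_span_eq_top hab
  have hV : finrank ℂ V = n + m := by rw [← finrank_add_eq_of_isCompl S.compl, hdim0, hdim1]
  by_contra hlong
  have hcodim : finrank ℂ V ≤ finrank ℂ (S.dcs 1) + 2 := by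
    have := finrank_add_le_finrank_add_finrank (S.dcs 1) (span ℂ {a, b})
    rw [hgenW, finrank_top] at this
    have := finrank_span_pair_le (K := ℂ) a b
    omega
  have hdrop := fun k =>
    finrank_dcs_le_finrank_dcs_succ_add_one hnilp hcodim (by rwa [hV]) (k := k)
  have hbot : S.dcs (2 * (n - 2) + 1) ≠ ⊥ := fun h => by
    have := finrank_L0_le_finrank_L0_inf_dcs hW hgenW hdrop (n - 2)
    rw [h, inf_bot_eq, finrank_bot] at this
    omega
  obtain ⟨x, hx0, hx1, hx2⟩ := exists_mem_L0_mem_dcs_one_notMem_dcs_two hnilp hW hgenW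
    fun h => hbot (le_bot_iff.1 (h ▸ S.dcs_antitone (by omega)))
  have hx : x ∉ S.dcs0 1 := fun h => hx2 (S.dcs_antitone (by omega)
    (dcs0_one_le_dcs_three (L0_le_dcs_one hW hgenW) h))
  have := (pow_flip_bracket_apply_notMem_dcs hnilp hW hgenW hdrop hx1 hx2 hbot).2
  rw [(hchar x hx0 hx).1 x hx0] at this
  exact this (zero_mem _)

/-- Theorem 3.6 of the paper: case of both generators in the odd
part `L₁`.  The nilindex is less than `n + m`, i.e. `L^{n+m-1} = 0`. -/
theorem leibnizSuper_nilindex_lt_of_odd_generators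
    {V : Type} [AddCommGroup V] [Module ℂ V] [FiniteDimensional ℂ V]
    (S : LeibnizSuper V) (n m : ℕ) (hn : 3 ≤ n) (hm : 2 ≤ m)
    (hdim0 : Module.finrank ℂ S.L0 = n) (hdim1 : Module.finrank ℂ S.L1 = m)
    (hnilp : ∃ s, S.dcs s = ⊥)
    (hchar : S.charSeqLE n m)
    (hgen : ∃ a ∈ S.L1, ∃ b ∈ S.L1, S.generates {a, b}) :
    S.dcs (n + m - 2) = ⊥ :=
  leibnizSuper_nilindex_lt_of_odd_generators_general S n m hn hdim0 hdim1 hnilp hchar hgen
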